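/- arXiv:2109.02698 — 5 statements merged into one kernel-verified Lean document; each statement's English description precedes it below -/
import Mathlib

section
/- Let p be a prime, r a positive integer, F a finite field with p^r elements, and n ≥ 1. Then the set Up_n(F) of upper unitriangular n×n matrices over F is a subgroup of GL_n(F) and is a Sylow p-subgroup of GL_n(F). -/
/-!
Upper unitriangular matrices form a subgroup of `GL_n(F)` over any field: upper triangularity is
preserved by products and inverses, and the diagonal of a product of upper triangular matrices is
the product of their diagonals. Such a matrix is determined by its `n(n-1)/2` entries above the
diagonal, so with `q = p ^ r` the subgroup has order `q ^ (n(n-1)/2)`, a power of `p`. Factoring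
`|GL_n(F)| = ∏ (q ^ n - q ^ i) = q ^ (n(n-1)/2) * ∏ (q ^ (n - i) - 1)` shows that its index is a
product of numbers `q ^ k - 1` with `k ≥ 1`, none divisible by `p`.
-/

open Matrix

/-- `M` is an upper unitriangular matrix: all diagonal entries are `1` and all
entries below the diagonal are `0`. -/
def IsUnitriangular {n : ℕ} {F : Type} [Field F]
    (M : Matrix (Fin n) (Fin n) F) : Prop :=
  (∀ i, M i i = 1) ∧ ∀ i j : Fin n, j < i → M i j = 0

theorem Nat.Prime.not_dvd_pow_sub_one {p q k : ℕ} (hp : p.Prime) (hpq : p ∣ q) (hq : q ≠ 0)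
    (hk : k ≠ 0) : ¬ p ∣ q ^ k - 1 := by
  intro h
  have h1 := Nat.dvd_sub (dvd_pow hpq hk) h
  rw [Nat.sub_sub_self (Nat.one_le_pow _ _ (Nat.pos_of_ne_zero hq))] at h1
  exact hp.not_dvd_one h1

theorem Matrix.IsUpperTriangular.mul_apply_self {m R : Type*} [LinearOrder m] [Fintype m]
    [NonUnitalNonAssocSemiring R] {M N : Matrix m m R} (hM : M.IsUpperTriangular)
    (hN : N.IsUpperTriangular) (i : m) : (M * N) i i = M i i * N i i := by
  rw [mul_apply, Finset.sum_eq_single i]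
  · intro k _ hki
    rcases hki.lt_or_gt with hki | hik
    · rw [hM hki, zero_mul]
    · rw [hN hik, mul_zero]
  · simp

namespace IsUnitriangular

variable {n : ℕ} {F : Type} [Field F] {M N : Matrix (Fin n) (Fin n) F}

theorem isUpperTriangular (hM : IsUnitriangular M) : M.IsUpperTriangular :=
  fun i j hji => hM.2 i j hji

theorem one : IsUnitriangular (1 : Matrix (Fin n) (Fin n) F) :=
  ⟨fun i => one_apply_eq i, fun _ _ hji => one_apply_ne hji.ne'⟩

theorem mul (hM : IsUnitriangular M) (hN : IsUnitriangular N) : IsUnitriangular (M * N) :=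
  ⟨fun i => by rw [hM.isUpperTriangular.mul_apply_self hN.isUpperTriangular, hM.1, hN.1, one_mul],
    fun _ _ hji => hM.isUpperTriangular.mul hN.isUpperTriangular hji⟩

theorem det_eq_one (hM : IsUnitriangular M) : M.det = 1 := by
  simp [det_of_isUpperTriangular hM.isUpperTriangular, hM.1]

theorem inv (hM : IsUnitriangular M) : IsUnitriangular M⁻¹ := by
  have : Invertible M := (M.isUnit_iff_isUnit_det.2 (hM.det_eq_one ▸ isUnit_one)).invertible
  have hinv : M⁻¹.IsUpperTriangular := blockTriangular_inv_of_blockTriangular hM.isUpperTriangular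
  refine ⟨fun i => ?_, fun _ _ hji => hinv hji⟩
  have hdiag := congr_fun₂ (inv_mul_of_invertible M) i i
  rwa [hinv.mul_apply_self hM.isUpperTriangular, hM.1, mul_one, one_apply_eq] at hdiag

end IsUnitriangular

def unitriangularGroup (n : ℕ) (F : Type) [Field F] : Subgroup (GL (Fin n) F) where
  carrier := {M | IsUnitriangular (M : Matrix (Fin n) (Fin n) F)}
  one_mem' := IsUnitriangular.one
  mul_mem' := IsUnitriangular.mul
  inv_mem' {M} hM := by
    simpa only [Set.mem_ofPred_eq, coe_units_inv] using IsUnitriangular.inv hM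

theorem mem_unitriangularGroup {n : ℕ} {F : Type} [Field F] {M : GL (Fin n) F} :
    M ∈ unitriangularGroup n F ↔ IsUnitriangular (M : Matrix (Fin n) (Fin n) F) :=
  Iff.rfl

abbrev StrictUpper (n : ℕ) : Type := {x : Fin n × Fin n // x.1 < x.2}

def strictUpperEquivSigma (n : ℕ) : StrictUpper n ≃ Σ j : Fin n, Fin j where
  toFun x := ⟨x.1.2, ⟨x.1.1, x.2⟩⟩
  invFun y := ⟨(⟨y.2, y.2.isLt.trans y.1.isLt⟩, y.1), y.2.isLt⟩
  left_inv _ := rfl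
  right_inv _ := rfl

theorem card_strictUpper (n : ℕ) : Fintype.card (StrictUpper n) = ∑ j : Fin n, (j : ℕ) := by
  simp [Fintype.card_congr (strictUpperEquivSigma n)]

section Count

variable {n : ℕ} {F : Type} [Field F]

def ofStrictUpper (g : StrictUpper n → F) : Matrix (Fin n) (Fin n) F :=
  of fun i j => if h : i < j then g ⟨(i, j), h⟩ else (1 : Matrix (Fin n) (Fin n) F) i j

theorem isUnitriangular_ofStrictUpper (g : StrictUpper n → F) :
    IsUnitriangular (ofStrictUpper g) :=
  ⟨fun i => by simp [ofStrictUpper],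
    fun i j hji => by simp [ofStrictUpper, hji.not_gt, one_apply_ne hji.ne']⟩

variable (n F) in
noncomputable def unitriangularGroupEquiv : unitriangularGroup n F ≃ (StrictUpper n → F) where
  toFun M x := ((M : GL (Fin n) F) : Matrix (Fin n) (Fin n) F) x.1.1 x.1.2
  invFun g := ⟨GeneralLinearGroup.mk'' (ofStrictUpper g)
      (by rw [(isUnitriangular_ofStrictUpper g).det_eq_one]; exact isUnit_one),
    isUnitriangular_ofStrictUpper g⟩
  left_inv := by
    rintro ⟨M, hM⟩
    ext i j
    rcases lt_trichotomy i j with hij | rfl | hji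
    · simp [ofStrictUpper, hij]
    · simp [ofStrictUpper, hM.1]
    · simp [ofStrictUpper, hji.not_gt, one_apply_ne hji.ne', hM.2 i j hji]
  right_inv g := funext fun x => dif_pos x.2

theorem card_unitriangularGroup [Fintype F] :
    Nat.card (unitriangularGroup n F) = Fintype.card F ^ ∑ j : Fin n, (j : ℕ) := by
  rw [Nat.card_congr (unitriangularGroupEquiv n F), Nat.card_eq_fintype_card, Fintype.card_fun,
    card_strictUpper]

end Count

section Index

variable {n : ℕ} {F : Type} [Field F] [Fintype F]

local notation "q" => Fintype.card F

theorem Matrix.card_GL_field_eq_pow_mul_prod :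
    Nat.card (GL (Fin n) F) = q ^ (∑ i : Fin n, (i : ℕ)) * ∏ i : Fin n, (q ^ (n - i) - 1) := by
  have factor (i : Fin n) : q ^ n - q ^ (i : ℕ) = q ^ (i : ℕ) * (q ^ (n - i) - 1) := by
    rw [Nat.mul_sub, mul_one, ← pow_add, Nat.add_sub_cancel' i.isLt.le]
  rw [card_GL_field, Finset.prod_congr rfl fun i _ => factor i, Finset.prod_mul_distrib,
    Finset.prod_pow_eq_pow_sum]

theorem index_unitriangularGroup :
    (unitriangularGroup n F).index = ∏ i : Fin n, (q ^ (n - i) - 1) := by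
  refine Nat.eq_of_mul_eq_mul_left (Nat.card_pos (α := unitriangularGroup n F)) ?_
  rw [Subgroup.card_mul_index, Matrix.card_GL_field_eq_pow_mul_prod, card_unitriangularGroup]

theorem not_dvd_index_unitriangularGroup {p : ℕ} (hp : p.Prime) (hpF : p ∣ q) :
    ¬ p ∣ (unitriangularGroup n F).index := by
  rw [index_unitriangularGroup]
  exact hp.prime.not_dvd_finsetProd fun i _ =>
    hp.not_dvd_pow_sub_one hpF Fintype.card_ne_zero (Nat.sub_ne_zero_of_lt i.isLt)

end Index

theorem unitriangular_is_sylow_general (p r n : ℕ) (hp : p.Prime) (hr : 0 < r)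
    (F : Type) [Field F] [Fintype F] (hF : Fintype.card F = p ^ r) :
    ∃ P : Sylow p (GL (Fin n) F),
      ∀ M : GL (Fin n) F,
        M ∈ P ↔ IsUnitriangular (M : Matrix (Fin n) (Fin n) F) := by
  have : Fact p.Prime := ⟨hp⟩
  have hpF : p ∣ Fintype.card F := hF ▸ dvd_pow_self p hr.ne'
  have hpGroup : IsPGroup p (unitriangularGroup n F) :=
    IsPGroup.of_card (by rw [card_unitriangularGroup, hF, ← pow_mul])
  exact ⟨hpGroup.toSylow (not_dvd_index_unitriangularGroup hp hpF), fun _ => mem_unitriangularGroup⟩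

/-- The set of upper unitriangular `n × n` matrices over a finite field `F` with
`p ^ r` elements is (the underlying set of) a Sylow `p`-subgroup of `GL n F`. -/
theorem unitriangular_is_sylow (p r n : ℕ) (hp : p.Prime) (hr : 0 < r) (hn : 1 ≤ n)
    (F : Type) [Field F] [Fintype F] (hF : Fintype.card F = p ^ r) :
    ∃ P : Sylow p (GL (Fin n) F),
      ∀ M : GL (Fin n) F,
        M ∈ P ↔ IsUnitriangular (M : Matrix (Fin n) (Fin n) F) :=
  unitriangular_is_sylow_general p r n hp hr F hF
end

section
/- Let p be a prime, r a positive integer, F a finite field with p^r elements, and n ≥ 3. For every nontrivial group homomorphism ψ from the additive group of F to the multiplicative group ℂ^×, there exists a complex representation ρ of Up_n(F) of dimension p^{r(n−2)} such that for every a ∈ F the central element I + a·E_{1,n} acts as the scalar ψ(a), i.e., ρ(I + a·E_{1,n}) = ψ(a)·id. -/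
open Matrix

/-!
An upper unitriangular matrix `M` maps, by right multiplication, every row vector `(1, t, x)`
with `t ∈ F^(n-2)` to a row vector `(1, T_M t, x + c_M t)` of the same shape, where `T_M` and
`c_M` do not depend on `x`. Associativity of the product then makes `M ↦ T_M` an action of
`Up_n(F)` on `F^(n-2)` and `c` an additive cocycle for it, so the monomial matrices with pattern
`T_M` and entries `ψ (c_M t)` form a representation of dimension `|F|^(n-2)`. The central
transvection `I + a E_{1,n}` fixes every `t` with cocycle `a`, hence acts as the scalar `ψ a`.
-/

section MonomialMatrix

variable {X R : Type*} [DecidableEq X]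

def monomialMatrix [Zero R] (T : X → X) (c : X → R) : Matrix X X R :=
  fun x y => if y = T x then c x else 0

theorem monomialMatrix_mul [Fintype X] [Semiring R] (T T' : X → X) (c c' : X → R) :
    monomialMatrix T c * monomialMatrix T' c' =
      monomialMatrix (T' ∘ T) fun x => c x * c' (T x) := by
  ext x y
  simp only [monomialMatrix, mul_apply, ite_mul, zero_mul]
  rw [Finset.sum_ite_eq']
  simp

theorem monomialMatrix_id [Zero R] (c : X → R) : monomialMatrix id c = diagonal c := by
  ext x y
  simp [monomialMatrix, diagonal, eq_comm]

end MonomialMatrix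

namespace IsUnitriangular

variable {n : ℕ} {F : Type} [Field F] {M : Matrix (Fin (n + 1)) (Fin (n + 1)) F}

theorem vecMul_apply_zero (hM : IsUnitriangular M) (v : Fin (n + 1) → F) :
    (v ᵥ* M) 0 = v 0 := by
  rw [vecMul, dotProduct, Finset.sum_eq_single 0]
  · simp [hM.1]
  · intro i _ hi
    simp [hM.2 i 0 (Fin.pos_iff_ne_zero.mpr hi)]
  · simp

theorem single_last_vecMul (hM : IsUnitriangular M) (x : F) :
    Pi.single (Fin.last n) x ᵥ* M = Pi.single (Fin.last n) x := by
  ext j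
  rw [single_vecMul]
  rcases eq_or_ne j (Fin.last n) with rfl | hj
  · simp [hM.1]
  · simp [hM.2 _ _ (Fin.lt_last_iff_ne_last.mpr hj), hj]

end IsUnitriangular

section AffineRow

variable {m : ℕ} {F : Type} [Field F]

def affineRow (t : Fin (m + 1) → F) (x : F) : Fin (m + 3) → F :=
  Fin.cons 1 (Fin.snoc t x)

@[simp] theorem affineRow_zero (t : Fin (m + 1) → F) (x : F) : affineRow t x 0 = 1 := rfl

@[simp] theorem affineRow_castSucc_succ (t : Fin (m + 1) → F) (x : F) (k : Fin (m + 1)) :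
    affineRow t x k.castSucc.succ = t k := by
  simp [affineRow]

@[simp] theorem affineRow_last (t : Fin (m + 1) → F) (x : F) :
    affineRow t x (Fin.last (m + 2)) = x := by
  rw [← Fin.succ_last]
  simp [affineRow]

theorem affineRow_ext {α : Type*} {v w : Fin (m + 3) → α} (h0 : v 0 = w 0)
    (hmid : ∀ k : Fin (m + 1), v k.castSucc.succ = w k.castSucc.succ)
    (hlast : v (Fin.last (m + 2)) = w (Fin.last (m + 2))) : v = w := by
  ext i
  refine Fin.cases h0 (fun j => Fin.lastCases ?_ hmid j) i
  rwa [← Fin.succ_last] at hlast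

theorem affineRow_eq_add_single (t : Fin (m + 1) → F) (x : F) :
    affineRow t x = affineRow t 0 + Pi.single (Fin.last (m + 2)) x :=
  affineRow_ext (by simp [Fin.last_pos.ne]) (fun k => by simp) (by simp)

def rowAction (M : Matrix (Fin (m + 3)) (Fin (m + 3)) F) (t : Fin (m + 1) → F) :
    Fin (m + 1) → F :=
  fun k => (affineRow t 0 ᵥ* M) k.castSucc.succ

def rowCocycle (M : Matrix (Fin (m + 3)) (Fin (m + 3)) F) (t : Fin (m + 1) → F) : F :=
  (affineRow t 0 ᵥ* M) (Fin.last (m + 2))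

theorem IsUnitriangular.affineRow_vecMul {M : Matrix (Fin (m + 3)) (Fin (m + 3)) F}
    (hM : IsUnitriangular M) (t : Fin (m + 1) → F) (x : F) :
    affineRow t x ᵥ* M = affineRow (rowAction M t) (x + rowCocycle M t) := by
  have h0 : affineRow t 0 ᵥ* M = affineRow (rowAction M t) (rowCocycle M t) :=
    affineRow_ext (by simp [hM.vecMul_apply_zero]) (fun _ => by simp [rowAction])
      (by simp [rowCocycle])
  rw [affineRow_eq_add_single t x, add_vecMul, hM.single_last_vecMul, h0,
    affineRow_eq_add_single _ (rowCocycle M t), affineRow_eq_add_single _ (x + _),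
    add_comm x, Pi.single_add, add_assoc]

theorem rowAction_mul {M N : Matrix (Fin (m + 3)) (Fin (m + 3)) F}
    (hM : IsUnitriangular M) (hN : IsUnitriangular N) :
    rowAction (M * N) = rowAction N ∘ rowAction M := by
  ext t k
  change (affineRow t 0 ᵥ* (M * N)) _ = rowAction N (rowAction M t) k
  rw [← vecMul_vecMul, hM.affineRow_vecMul, hN.affineRow_vecMul, affineRow_castSucc_succ]

theorem rowCocycle_mul {M N : Matrix (Fin (m + 3)) (Fin (m + 3)) F}
    (hM : IsUnitriangular M) (hN : IsUnitriangular N) (t : Fin (m + 1) → F) :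
    rowCocycle (M * N) t = rowCocycle M t + rowCocycle N (rowAction M t) := by
  rw [rowCocycle, ← vecMul_vecMul, hM.affineRow_vecMul, hN.affineRow_vecMul, affineRow_last,
    zero_add]

theorem rowAction_one : rowAction (1 : Matrix (Fin (m + 3)) (Fin (m + 3)) F) = id := by
  ext t k
  simp [rowAction]

theorem rowCocycle_one (t : Fin (m + 1) → F) :
    rowCocycle (1 : Matrix (Fin (m + 3)) (Fin (m + 3)) F) t = 0 := by
  simp [rowCocycle]

theorem affineRow_vecMul_transvection (t : Fin (m + 1) → F) (a : F) :
    affineRow t 0 ᵥ* transvection 0 (Fin.last (m + 2)) a = affineRow t a := by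
  have hsingle : (single 0 (Fin.last (m + 2)) a : Matrix (Fin (m + 3)) (Fin (m + 3)) F) =
      a • single 0 (Fin.last (m + 2)) 1 := by
    rw [smul_single, smul_eq_mul, mul_one]
  rw [transvection, hsingle, vecMul_add, vecMul_one, vecMul_smul,
    single_eq_single_vecMulVec_single, vecMul_vecMulVec, dotProduct_single_one, affineRow_zero,
    one_smul, ← Pi.single_smul', smul_eq_mul, mul_one, ← affineRow_eq_add_single]

end AffineRow

section AffineMonomialRep

variable {m : ℕ} {F : Type} [Field F] [DecidableEq F] (ψ : Multiplicative F →* ℂˣ)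

noncomputable def affineMonomialMatrix (M : Matrix (Fin (m + 3)) (Fin (m + 3)) F) :
    Matrix (Fin (m + 1) → F) (Fin (m + 1) → F) ℂ :=
  monomialMatrix (rowAction M) fun t => (ψ (Multiplicative.ofAdd (rowCocycle M t)) : ℂ)

theorem affineMonomialMatrix_mul [Fintype F] {M N : Matrix (Fin (m + 3)) (Fin (m + 3)) F}
    (hM : IsUnitriangular M) (hN : IsUnitriangular N) :
    affineMonomialMatrix ψ (M * N) = affineMonomialMatrix ψ M * affineMonomialMatrix ψ N := by
  simp only [affineMonomialMatrix, monomialMatrix_mul, rowAction_mul hM hN,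
    rowCocycle_mul hM hN, ofAdd_add, map_mul, Units.val_mul]

theorem affineMonomialMatrix_one :
    affineMonomialMatrix ψ (1 : Matrix (Fin (m + 3)) (Fin (m + 3)) F) = 1 := by
  simp [affineMonomialMatrix, rowAction_one, rowCocycle_one, monomialMatrix_id]

theorem affineMonomialMatrix_transvection (a : F) :
    affineMonomialMatrix ψ (transvection 0 (Fin.last (m + 2)) a) =
      (ψ (Multiplicative.ofAdd a) : ℂ) • 1 := by
  have hAction : rowAction (transvection 0 (Fin.last (m + 2)) a) = id := by
    ext t k
    simp [rowAction, affineRow_vecMul_transvection]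
  have hCocycle (t : Fin (m + 1) → F) :
      rowCocycle (transvection 0 (Fin.last (m + 2)) a) t = a := by
    simp [rowCocycle, affineRow_vecMul_transvection]
  simp only [affineMonomialMatrix, hAction, hCocycle, monomialMatrix_id, smul_one_eq_diagonal]

noncomputable def affineMonomialRep [Fintype F] (U : Subgroup (GL (Fin (m + 3)) F))
    (hU : ∀ M ∈ U, IsUnitriangular (M : Matrix (Fin (m + 3)) (Fin (m + 3)) F)) :
    U →* Matrix (Fin (m + 1) → F) (Fin (m + 1) → F) ℂ where
  toFun M := affineMonomialMatrix ψ (M : GL (Fin (m + 3)) F)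
  map_one' := affineMonomialMatrix_one ψ
  map_mul' M N := affineMonomialMatrix_mul ψ (hU _ M.2) (hU _ N.2)

end AffineMonomialRep

/-- For every nontrivial character `ψ` of the additive group of `F`, there is a complex
representation of `Up_n(F)` of dimension `p ^ (r * (n - 2))` on which each central
element `I + a • E_{1,n}` acts as the scalar `ψ a`. -/
theorem unitriangular_rep_with_central_character (p r n : ℕ)
    (hn : 3 ≤ n) (F : Type) [Field F] [Fintype F] (hF : Fintype.card F = p ^ r)
    (U : Subgroup (GL (Fin n) F))
    (hU : ∀ M : GL (Fin n) F, M ∈ U ↔ IsUnitriangular (M : Matrix (Fin n) (Fin n) F))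
    (ψ : Multiplicative F →* ℂˣ) :
    ∃ ρ : ↥U →* GL (Fin (p ^ (r * (n - 2)))) ℂ,
      ∀ (a : F) (M : ↥U),
        ((M : GL (Fin n) F) : Matrix (Fin n) (Fin n) F) =
            1 + a • Matrix.single
              (⟨0, by omega⟩ : Fin n) (⟨n - 1, by omega⟩ : Fin n) (1 : F) →
          ((ρ M : GL (Fin (p ^ (r * (n - 2)))) ℂ) :
              Matrix (Fin (p ^ (r * (n - 2)))) (Fin (p ^ (r * (n - 2)))) ℂ) =
            ((ψ (Multiplicative.ofAdd a) : ℂˣ) : ℂ) • 1 := by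
  classical
  obtain ⟨m, rfl⟩ : ∃ m, n = m + 3 := ⟨n - 3, by omega⟩
  have hcard : Fintype.card (Fin (m + 1) → F) = p ^ (r * (m + 3 - 2)) := by
    rw [Fintype.card_fun, hF, Fintype.card_fin, ← pow_mul]
    rfl
  let reindex := reindexAlgEquiv ℂ ℂ (Fintype.equivFinOfCardEq hcard)
  refine ⟨(Units.map reindex.toMonoidHom).comp
    (affineMonomialRep ψ U fun M => (hU M).mp).toHomUnits, fun a M hM => ?_⟩
  have hM' : ((M : GL (Fin (m + 3)) F) : Matrix (Fin (m + 3)) (Fin (m + 3)) F) =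
      transvection 0 (Fin.last (m + 2)) a := by
    rw [hM, smul_single, smul_eq_mul, mul_one]
    rfl
  change reindex (affineMonomialMatrix ψ _) = _
  rw [hM', affineMonomialMatrix_transvection, map_smul, map_one]
end

section
/- Let p be an odd prime, r a positive integer, F a finite field with p^r elements, and n ≥ 1. Let D be a symmetric n×n matrix over F (Dᵀ = D). Then A·D·Aᵀ = D for every A ∈ Up_n(F) if and only if every entry of D except possibly the (1,1) entry is zero, i.e., D = d·E_{1,1} for some d ∈ F. (Equivalently, A·D = D·(A⁻¹)ᵀ for all unitriangular A iff D = d·E_{1,1}.) -/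
open Matrix

theorem FiniteField.two_ne_zero_of_card_eq_prime_pow {F : Type*} [Field F] [Fintype F]
    {p r : ℕ} (hp : p.Prime) (hp2 : p ≠ 2) (hF : Fintype.card F = p ^ r) : (2 : F) ≠ 0 := by
  refine Ring.two_ne_zero fun hchar => ?_
  have hodd : Odd (Fintype.card F) := hF ▸ (hp.odd_of_ne_two hp2).pow
  exact Nat.not_even_iff_odd.mpr hodd
    (Nat.even_iff.mpr (FiniteField.even_card_iff_char_two.mp hchar))

namespace Matrix

variable {ι R : Type*} [DecidableEq ι]

theorem transpose_transvection [CommRing R] (i j : ι) (c : R) :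
    (transvection i j c)ᵀ = transvection j i c := by
  simp [transvection, transpose_single]

theorem row_eq_zero_of_transvection_conj_eq [Fintype ι] [CommRing R] [NoZeroDivisors R]
    {D : Matrix ι ι R} (hD : Dᵀ = D) (h2 : (2 : R) ≠ 0) {i j : ι} (hij : i ≠ j)
    (h : transvection i j 1 * D * (transvection i j 1)ᵀ = D) (b : ι) : D j b = 0 := by
  rw [transpose_transvection] at h
  have hsymm : D j i = D i j := congrFun (congrFun hD i) j
  have hrow : ∀ b, b ≠ i → D j b = 0 := fun b hb => by
    simpa [hb] using congrFun (congrFun h i) b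
  have hcorner : D j i + D i j + D j j = 0 := by
    have := congrFun (congrFun h i) i
    simp only [mul_transvection_apply_same, transvection_mul_apply_same] at this
    linear_combination this
  by_cases hb : b = i
  · rw [hb]
    have hdiag : D j j = 0 := hrow j hij.symm
    refine (mul_eq_zero.mp ?_).resolve_left h2
    linear_combination hcorner + hsymm - hdiag
  · exact hrow b hb

theorem eq_single_of_row_eq_zero [Zero R] {D : Matrix ι ι R} (hD : Dᵀ = D) {z : ι}
    (hrow : ∀ j, j ≠ z → ∀ b, D j b = 0) : D = single z z (D z z) := by
  ext a b
  rcases eq_or_ne a z with rfl | ha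
  · rcases eq_or_ne b a with rfl | hb
    · simp
    · rw [← hD, transpose_apply, hrow b hb, single_apply_of_col_ne _ _ hb.symm]
  · rw [hrow a ha, single_apply_of_row_ne ha.symm]

end Matrix

namespace IsUnitriangular

variable {n : ℕ} {F : Type} [Field F]

theorem transvection {i j : Fin n} (hij : i < j) (c : F) :
    IsUnitriangular (transvection i j c) := by
  refine ⟨fun k => ?_, fun a b hba => ?_⟩
  · rw [Matrix.transvection, Matrix.add_apply, one_apply_eq,
      single_apply_of_ne _ _ _ _ _ fun h => hij.ne (h.1.trans h.2.symm), add_zero]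
  · rw [Matrix.transvection, Matrix.add_apply, one_apply_ne hba.ne',
      single_apply_of_ne _ _ _ _ _ fun ⟨hia, hjb⟩ => (hia ▸ hjb ▸ hij).not_gt hba, add_zero]

theorem mul_single_of_isBot {A : Matrix (Fin n) (Fin n) F} (hA : IsUnitriangular A)
    {z : Fin n} (hz : IsBot z) (c : F) : A * single z z c = single z z c := by
  ext a b
  rcases eq_or_ne b z with rfl | hb
  · rcases eq_or_ne a b with rfl | ha
    · simp [hA.1]
    · simp [hA.2 a b ((hz a).lt_of_ne ha.symm), single_apply_of_row_ne ha.symm]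
  · simp [mul_single_apply_of_ne _ _ _ _ _ hb, single_apply_of_col_ne _ _ hb.symm]

theorem mul_single_mul_transpose_of_isBot {A : Matrix (Fin n) (Fin n) F}
    (hA : IsUnitriangular A) {z : Fin n} (hz : IsBot z) (c : F) :
    A * single z z c * Aᵀ = single z z c := by
  rw [hA.mul_single_of_isBot hz, ← transpose_single z z c, ← transpose_mul,
    hA.mul_single_of_isBot hz, transpose_single]

end IsUnitriangular

/-- For `p` odd and `D` symmetric, `A * D * Aᵀ = D` for all unitriangular `A`
iff `D = d • E_{1,1}` for some `d ∈ F`. -/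
theorem symmetric_fixed_by_unitriangular (p r n : ℕ) (hp : p.Prime) (hp2 : p ≠ 2)
    (hn : 1 ≤ n)
    (F : Type) [Field F] [Fintype F] (hF : Fintype.card F = p ^ r)
    (D : Matrix (Fin n) (Fin n) F) (hD : Dᵀ = D) :
    (∀ A : Matrix (Fin n) (Fin n) F, IsUnitriangular A → A * D * Aᵀ = D) ↔
      ∃ d : F, D = d • Matrix.single
        (⟨0, by omega⟩ : Fin n) (⟨0, by omega⟩ : Fin n) (1 : F) := by
  set z : Fin n := ⟨0, by omega⟩
  have hz : IsBot z := fun i => Nat.zero_le i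
  have h2 : (2 : F) ≠ 0 := FiniteField.two_ne_zero_of_card_eq_prime_pow hp hp2 hF
  simp only [smul_single, smul_eq_mul, mul_one]
  constructor
  · intro h
    refine ⟨D z z, eq_single_of_row_eq_zero hD fun j hj => ?_⟩
    exact row_eq_zero_of_transvection_conj_eq hD h2 hj.symm
      (h _ (.transvection ((hz j).lt_of_ne hj.symm) 1))
  · rintro ⟨d, rfl⟩ A hA
    exact hA.mul_single_mul_transpose_of_isBot hz d
end

section
/- Let p be a prime, r a positive integer, F a finite field with p^r elements, and n ≥ 1. Let S be the 2n×2n block matrix [[0, I_n],[−I_n, 0]] and Sp(2n,F) = {M ∈ GL_{2n}(F) : Mᵀ S M = S}. Then the set P(n,F) of block matrices [[A, A·B],[0, (Aᵀ)⁻¹]] with A ∈ Up_n(F) and B a symmetric n×n matrix over F is a subgroup of Sp(2n,F), and it is a Sylow p-subgroup of Sp(2n,F). -/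
/-!
Order the standard symplectic basis as `e₁, …, eₙ, fₙ, …, f₁` and let `V_k` be the span of its
first `k` vectors. A symplectic matrix has the block form `[[A, A·B], [0, (Aᵀ)⁻¹]]` exactly when it
is unitriangular in this basis, so `P(n, F)` is `Sp(2n, F)` intersected with a unitriangular
group; it is a `p`-group because `M - 1` is nilpotent and `M ^ p ^ k = 1 + (M - 1) ^ p ^ k` in
characteristic `p`.

Since `p`-groups satisfy the normalizer condition, maximality reduces to showing that every
element `g` of `p`-power order normalizing `P` lies in `P`. The flag `(V_k)` is determined by `P`:
`v ∈ V_{k+1}` iff `(m - 1) v ∈ V_k` for all `m ∈ P`. Hence `g` preserves the flag, so it is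
triangular, and its diagonal entries, being `p`-power roots of unity, are `1`.
-/

open Matrix

open Polynomial

theorem IsPGroup.eq_of_le_of_normalizer_pow_mem {G : Type*} [Group G] {p : ℕ} [Fact p.Prime]
    {P Q : Subgroup G} [Finite Q] (hQ : IsPGroup p Q) (hPQ : P ≤ Q)
    (hP : ∀ g ∈ Subgroup.normalizer (P : Set G), (∃ k, g ^ p ^ k = 1) → g ∈ P) : Q = P := by
  refine le_antisymm ?_ hPQ
  by_contra hQP
  have hlt : P.subgroupOf Q < ⊤ := by
    refine lt_top_iff_ne_top.mpr fun htop => hQP fun g hg => ?_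
    simpa using Subgroup.subgroupOf_eq_top.mp htop hg
  have := hQ.isNilpotent
  obtain ⟨x, hxN, hxP⟩ := SetLike.exists_of_lt (Group.normalizerCondition_of_isNilpotent _ hlt)
  rw [← Subgroup.subgroupOf_normalizer_eq hPQ, Subgroup.mem_subgroupOf] at hxN
  obtain ⟨k, hk⟩ := hQ x
  exact hxP (Subgroup.mem_subgroupOf.mpr (hP _ hxN ⟨k, by simpa using congrArg Subtype.val hk⟩))

namespace Matrix

section Unitriangular

variable {ι α R : Type*} [LinearOrder α] [CommRing R] {b : ι → α} {M N : Matrix ι ι R}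

def IsUnitriangularWrt (b : ι → α) (M : Matrix ι ι R) : Prop :=
  (∀ i, M i i = 1) ∧ M.BlockTriangular b

theorem isUnitriangular_iff_isUnitriangularWrt {n : ℕ} {F : Type} [Field F]
    {A : Matrix (Fin n) (Fin n) F} : IsUnitriangular A ↔ A.IsUnitriangularWrt id :=
  Iff.rfl

theorem BlockTriangular.mul_apply_diag [Fintype ι] (hb : b.Injective) (hM : M.BlockTriangular b)
    (hN : N.BlockTriangular b) (i : ι) : (M * N) i i = M i i * N i i := by
  rw [mul_apply, Finset.sum_eq_single i]
  · intro k _ hki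
    rcases lt_or_gt_of_ne (hb.ne hki) with h | h
    · rw [hM h, zero_mul]
    · rw [hN h, mul_zero]
  · simp

theorem IsUnitriangularWrt.one [DecidableEq ι] : (1 : Matrix ι ι R).IsUnitriangularWrt b :=
  ⟨fun i => one_apply_eq i, blockTriangular_one⟩

theorem IsUnitriangularWrt.mul [Fintype ι] (hb : b.Injective) (hM : M.IsUnitriangularWrt b)
    (hN : N.IsUnitriangularWrt b) : (M * N).IsUnitriangularWrt b :=
  ⟨fun i => by rw [hM.2.mul_apply_diag hb hN.2, hM.1, hN.1, one_mul], hM.2.mul hN.2⟩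

variable [Fintype ι] [DecidableEq ι]

-- Triangularity along an injective `b` is upper triangularity for the order pulled back by `b`.
theorem BlockTriangular.det_of_injective (hb : b.Injective) (hM : M.BlockTriangular b) :
    M.det = ∏ i, M i i :=
  letI : LinearOrder ι := LinearOrder.lift' b hb
  det_of_isUpperTriangular hM

theorem BlockTriangular.charpoly_of_injective (hb : b.Injective) (hM : M.BlockTriangular b) :
    M.charpoly = ∏ i, (X - C (M i i)) :=
  letI : LinearOrder ι := LinearOrder.lift' b hb
  charpoly_of_isUpperTriangular M hM

theorem BlockTriangular.pow_apply_diag (hb : b.Injective) (hM : M.BlockTriangular b) (k : ℕ)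
    (i : ι) : (M ^ k) i i = M i i ^ k := by
  induction k with
  | zero => simp
  | succ k ih => rw [pow_succ, pow_succ, (hM.pow k).mul_apply_diag hb hM, ih]

theorem BlockTriangular.isUnitriangularWrt_of_pow_eq_one [IsReduced R] {p k : ℕ} [ExpChar R p]
    (hb : b.Injective) (hM : M.BlockTriangular b) (hpow : M ^ p ^ k = 1) :
    M.IsUnitriangularWrt b := by
  refine ⟨fun i => ?_, hM⟩
  have hdiag := congr_fun (congr_fun hpow i) i
  rw [hM.pow_apply_diag hb, one_apply_eq, ← mul_one (p ^ k)] at hdiag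
  simpa using (ExpChar.pow_prime_pow_mul_eq_one_iff p k 1 (M i i)).mp hdiag

namespace IsUnitriangularWrt

theorem det_eq_one (hb : b.Injective) (hM : M.IsUnitriangularWrt b) : M.det = 1 := by
  simp [hM.2.det_of_injective hb, hM.1]

theorem isUnit (hb : b.Injective) (hM : M.IsUnitriangularWrt b) : IsUnit M :=
  (isUnit_iff_isUnit_det M).mpr (by rw [hM.det_eq_one hb]; exact isUnit_one)

theorem inv (hb : b.Injective) (hM : M.IsUnitriangularWrt b) : M⁻¹.IsUnitriangularWrt b := by
  have hdet : IsUnit M.det := by rw [hM.det_eq_one hb]; exact isUnit_one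
  let _ := M.invertibleOfIsUnitDet hdet
  have hinv : M⁻¹.BlockTriangular b := blockTriangular_inv_of_blockTriangular hM.2
  refine ⟨fun i => ?_, hinv⟩
  have := congr_fun (congr_fun (mul_nonsing_inv M hdet) i) i
  rwa [hM.2.mul_apply_diag hb hinv, hM.1, one_mul, one_apply_eq] at this

theorem sub_one_pow_card_eq_zero (hb : b.Injective) (hM : M.IsUnitriangularWrt b) :
    (M - 1) ^ Fintype.card ι = 0 := by
  have hchar : M.charpoly = (X - C 1) ^ Fintype.card ι := by
    simp [hM.2.charpoly_of_injective hb, hM.1]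
  simpa [hchar] using aeval_self_charpoly M

theorem pow_char_pow_eq_one (p : ℕ) [Fact p.Prime] [CharP R p] (hb : b.Injective)
    (hM : M.IsUnitriangularWrt b) : M ^ p ^ Fintype.card ι = 1 := by
  -- `Matrix.charP` needs a nonempty index type
  cases isEmpty_or_nonempty ι
  · exact Subsingleton.elim _ _
  have hle : Fintype.card ι ≤ p ^ Fintype.card ι :=
    (Nat.lt_pow_self (Fact.out : p.Prime).one_lt).le
  calc M ^ p ^ Fintype.card ι = (1 + (M - 1)) ^ p ^ Fintype.card ι := by rw [add_sub_cancel]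
    _ = 1 + (M - 1) ^ p ^ Fintype.card ι := by
      rw [add_pow_char_pow_of_commute p _ (Commute.one_left _), one_pow]
    _ = 1 := by
      rw [← Nat.sub_add_cancel hle, pow_add, hM.sub_one_pow_card_eq_zero hb, mul_zero, add_zero]

end IsUnitriangularWrt

variable (R) in
def unitriangularGroup (hb : b.Injective) : Subgroup (GL ι R) where
  carrier := {M | (M : Matrix ι ι R).IsUnitriangularWrt b}
  one_mem' := IsUnitriangularWrt.one
  mul_mem' hM hN := hM.mul hb hN
  inv_mem' {M} hM := by
    show (↑M⁻¹ : Matrix ι ι R).IsUnitriangularWrt b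
    rw [coe_units_inv]
    exact hM.inv hb

theorem isPGroup_unitriangularGroup (p : ℕ) [Fact p.Prime] [CharP R p] (hb : b.Injective) :
    IsPGroup p (unitriangularGroup R hb) := fun M =>
  ⟨Fintype.card ι, Subtype.ext (Units.ext (by simpa using M.2.pow_char_pow_eq_one p hb))⟩

end Unitriangular

section Flag

variable {ι R : Type*} [Fintype ι] [DecidableEq ι] [CommRing R] {b : ι → ℕ}

def SupportedBelow (b : ι → ℕ) (k : ℕ) (v : ι → R) : Prop :=
  ∀ i, k ≤ b i → v i = 0

theorem IsUnitriangularWrt.supportedBelow_mulVec_sub_self (hb : b.Injective)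
    {M : Matrix ι ι R} (hM : M.IsUnitriangularWrt b) {k : ℕ} {v : ι → R}
    (hv : SupportedBelow b (k + 1) v) : SupportedBelow b k (M *ᵥ v - v) := by
  intro i hi
  rw [show M *ᵥ v - v = (M - 1) *ᵥ v by rw [sub_mulVec, one_mulVec]]
  show ∑ j, (M - 1) i j * v j = 0
  refine Finset.sum_eq_zero fun j _ => ?_
  rcases lt_trichotomy (b j) (b i) with hji | hji | hji
  · rw [sub_apply, hM.2 hji, one_apply_ne (ne_of_apply_ne b hji.ne'), sub_zero, zero_mul]
  · rw [hb hji, sub_apply, hM.1, one_apply_eq, sub_self, zero_mul]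
  · rw [hv j (by omega), mul_zero]

theorem blockTriangular_of_forall_conj_isUnitriangularWrt (hb : b.Injective)
    {U : Set (Matrix ι ι R)}
    (hU : ∀ k v, (∀ m ∈ U, SupportedBelow b k (m *ᵥ v - v)) → SupportedBelow b (k + 1) v)
    {g g' : Matrix ι ι R} (hg : g * g' = 1)
    (hconj : ∀ m ∈ U, (g' * m * g).IsUnitriangularWrt b) : g.BlockTriangular b := by
  have hflag : ∀ k v, SupportedBelow b k v → SupportedBelow b k (g *ᵥ v) := by
    intro k
    induction k with
    | zero =>
      intro v hv
      rw [show v = 0 from funext fun i => hv i (Nat.zero_le _), mulVec_zero]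
      exact fun _ _ => rfl
    | succ k ih =>
      intro v hv
      refine hU k _ fun m hm => ?_
      have hcomm : m *ᵥ (g *ᵥ v) - g *ᵥ v = g *ᵥ ((g' * m * g) *ᵥ v - v) := by
        rw [mulVec_sub, mulVec_mulVec, mulVec_mulVec, ← Matrix.mul_assoc, ← Matrix.mul_assoc,
          hg, Matrix.one_mul]
      rw [hcomm]
      exact ih _ ((hconj m hm).supportedBelow_mulVec_sub_self hb hv)
  intro i j hji
  have hj : SupportedBelow b (b j + 1) (Pi.single j (1 : R)) := fun l hl =>
    Pi.single_eq_of_ne (by rintro rfl; omega) 1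
  simpa using hflag _ _ hj i (by omega)

end Flag

section Blocks

variable {l m R : Type*} [Fintype l] [Fintype m] [Ring R]
  {A : Matrix l l R} {B : Matrix l m R} {C : Matrix m l R} {D : Matrix m m R}

theorem fromBlocks_mulVec_sub_self_inl [DecidableEq l] (v : l ⊕ m → R) (i : l) :
    (fromBlocks A B C D *ᵥ v - v) (Sum.inl i) =
      ((A - 1) *ᵥ (v ∘ Sum.inl)) i + (B *ᵥ (v ∘ Sum.inr)) i := by
  simp [fromBlocks_mulVec, sub_mulVec, add_sub_right_comm]

theorem fromBlocks_mulVec_sub_self_inr [DecidableEq m] (v : l ⊕ m → R) (i : m) :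
    (fromBlocks A B C D *ᵥ v - v) (Sum.inr i) =
      (C *ᵥ (v ∘ Sum.inl)) i + ((D - 1) *ᵥ (v ∘ Sum.inr)) i := by
  simp [fromBlocks_mulVec, sub_mulVec, add_sub_assoc]

end Blocks

theorem transpose_transvection_inv {ι R : Type*} [Fintype ι] [DecidableEq ι] [CommRing R]
    {i j : ι} (hij : i ≠ j) (c : R) : ((transvection i j c)ᵀ)⁻¹ = transvection j i (-c) := by
  refine inv_eq_right_inv ?_
  rw [transvection, transpose_add, transpose_one, transpose_single, ← transvection,
    transvection_mul_transvection_same _ _ hij.symm, add_neg_cancel, transvection_zero]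

end Matrix

section Symplectic

variable {n : ℕ} {F : Type} [Field F]

def flagIndex (n : ℕ) : Fin n ⊕ Fin n → ℕ :=
  Sum.elim (fun i => i) (fun j => 2 * n - 1 - j)

theorem flagIndex_injective (n : ℕ) : (flagIndex n).Injective := by
  rintro (i | i) (j | j) h <;> simp only [flagIndex, Sum.elim_inl, Sum.elim_inr] at h <;>
    have := i.is_lt <;> have := j.is_lt
  · exact congrArg Sum.inl (Fin.ext h)
  · omega
  · omega
  · exact congrArg Sum.inr (Fin.ext (by omega))

def symplecticForm (n : ℕ) (F : Type) [Field F] : Matrix (Fin n ⊕ Fin n) (Fin n ⊕ Fin n) F :=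
  fromBlocks 0 1 (-1) 0

/-- Membership in the group `P(n, F)`. -/
def IsSylowBlock (m : Matrix (Fin n ⊕ Fin n) (Fin n ⊕ Fin n) F) : Prop :=
  ∃ A B : Matrix (Fin n) (Fin n) F, IsUnitriangular A ∧ Bᵀ = B ∧
    m = fromBlocks A (A * B) 0 (Aᵀ)⁻¹

theorem IsUnitriangular.isUnitriangularWrt_inv {A : Matrix (Fin n) (Fin n) F}
    (hA : IsUnitriangular A) : A⁻¹.IsUnitriangularWrt id :=
  (isUnitriangular_iff_isUnitriangularWrt.mp hA).inv Function.injective_id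

theorem IsUnitriangular.isUnit_det {A : Matrix (Fin n) (Fin n) F} (hA : IsUnitriangular A) :
    IsUnit A.det := by
  rw [(isUnitriangular_iff_isUnitriangularWrt.mp hA).det_eq_one Function.injective_id]
  exact isUnit_one

theorem isUnitriangular_transvection {i j : Fin n} (hij : i < j) (c : F) :
    IsUnitriangular (transvection i j c) := by
  refine ⟨fun l => ?_, fun a b hba => ?_⟩
  · rw [transvection, Matrix.add_apply, one_apply_eq, Matrix.single_apply_of_ne, add_zero]
    rintro ⟨rfl, rfl⟩
    exact lt_irrefl _ hij
  · rw [transvection, Matrix.add_apply, one_apply_ne hba.ne', Matrix.single_apply_of_ne,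
      add_zero]
    rintro ⟨rfl, rfl⟩
    exact lt_asymm hij hba

theorem isSylowBlock_fromBlocks_diagonal {A : Matrix (Fin n) (Fin n) F} (hA : IsUnitriangular A) :
    IsSylowBlock (fromBlocks A 0 0 (Aᵀ)⁻¹) :=
  ⟨A, 0, hA, transpose_zero, by rw [Matrix.mul_zero]⟩

theorem isSylowBlock_fromBlocks_one {B : Matrix (Fin n) (Fin n) F} (hB : Bᵀ = B) :
    IsSylowBlock (fromBlocks 1 B 0 1) :=
  ⟨1, B, isUnitriangular_iff_isUnitriangularWrt.mpr IsUnitriangularWrt.one, hB,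
    by rw [Matrix.one_mul, transpose_one, inv_one]⟩

theorem IsSylowBlock.isUnitriangularWrt {m : Matrix (Fin n ⊕ Fin n) (Fin n ⊕ Fin n) F}
    (hm : IsSylowBlock m) : m.IsUnitriangularWrt (flagIndex n) := by
  obtain ⟨A, B, hA, -, rfl⟩ := hm
  have hAinv := hA.isUnitriangularWrt_inv
  rw [← transpose_nonsing_inv]
  refine ⟨?_, ?_⟩
  · rintro (i | i)
    · exact hA.1 i
    · exact hAinv.1 i
  · rintro (i | i) (j | j) hji <;> simp only [flagIndex, Sum.elim_inl, Sum.elim_inr] at hji <;>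
      have := i.is_lt <;> have := j.is_lt
    · exact hA.2 i j hji
    · omega
    · rfl
    · exact hAinv.2 (show i < j by rw [Fin.lt_def]; omega)

theorem IsSylowBlock.transpose_mul_symplecticForm_mul
    {m : Matrix (Fin n ⊕ Fin n) (Fin n ⊕ Fin n) F} (hm : IsSylowBlock m) :
    mᵀ * symplecticForm n F * m = symplecticForm n F := by
  obtain ⟨A, B, hA, hB, rfl⟩ := hm
  have hu : IsUnit A.det := hA.isUnit_det
  have huT : IsUnit Aᵀ.det := by rwa [det_transpose]
  rw [symplecticForm, fromBlocks_transpose, fromBlocks_multiply, fromBlocks_multiply,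
    ← transpose_nonsing_inv, transpose_transpose]
  refine fromBlocks_inj.mpr ⟨by simp, ?_, ?_, ?_⟩
  · simp [transpose_nonsing_inv, mul_nonsing_inv _ huT]
  · simp [nonsing_inv_mul _ hu]
  · simp only [transpose_mul, Matrix.mul_zero, zero_add, add_zero, Matrix.mul_one,
      Matrix.mul_neg, Matrix.neg_mul, hB]
    rw [Matrix.mul_assoc B, ← transpose_mul, nonsing_inv_mul _ hu, transpose_one,
      Matrix.mul_one, ← Matrix.mul_assoc, nonsing_inv_mul _ hu, Matrix.one_mul, neg_add_cancel]

theorem isSylowBlock_of_isUnitriangularWrt {g : Matrix (Fin n ⊕ Fin n) (Fin n ⊕ Fin n) F}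
    (hs : gᵀ * symplecticForm n F * g = symplecticForm n F)
    (hg : g.IsUnitriangularWrt (flagIndex n)) : IsSylowBlock g := by
  have hc : g.toBlocks₂₁ = 0 := by
    ext i j
    exact hg.2 (show flagIndex n (Sum.inl j) < flagIndex n (Sum.inr i) by
      simp only [flagIndex, Sum.elim_inl, Sum.elim_inr]; omega)
  have hblocks : g = fromBlocks g.toBlocks₁₁ g.toBlocks₁₂ 0 g.toBlocks₂₂ := by
    rw [← hc, fromBlocks_toBlocks]
  set A := g.toBlocks₁₁
  set B := g.toBlocks₁₂
  set D := g.toBlocks₂₂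
  have hA : IsUnitriangular A :=
    ⟨fun i => hg.1 (Sum.inl i), fun i j hji => hg.2 (show j.val < i.val from hji)⟩
  rw [hblocks, symplecticForm, fromBlocks_transpose, fromBlocks_multiply, fromBlocks_multiply]
    at hs
  simp only [transpose_zero, Matrix.mul_zero, Matrix.zero_mul, Matrix.mul_one, Matrix.mul_neg,
    Matrix.neg_mul, neg_zero, zero_add, add_zero, fromBlocks_inj] at hs
  obtain ⟨-, hAD, -, hBD⟩ := hs
  have hD : (Aᵀ)⁻¹ = D := inv_eq_right_inv hAD
  have hDT : Dᵀ = A⁻¹ := by rw [← hD, ← transpose_nonsing_inv, transpose_transpose]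
  refine ⟨A, A⁻¹ * B, hA, ?_, ?_⟩
  · rw [transpose_mul, transpose_nonsing_inv, hD, ← hDT]
    exact (neg_add_eq_zero.mp hBD).symm
  · rw [hblocks, ← Matrix.mul_assoc, mul_nonsing_inv _ hA.isUnit_det, Matrix.one_mul, hD]

theorem isSylowBlock_iff_isUnitriangularWrt {g : Matrix (Fin n ⊕ Fin n) (Fin n ⊕ Fin n) F}
    (hs : gᵀ * symplecticForm n F * g = symplecticForm n F) :
    IsSylowBlock g ↔ g.IsUnitriangularWrt (flagIndex n) :=
  ⟨IsSylowBlock.isUnitriangularWrt, isSylowBlock_of_isUnitriangularWrt hs⟩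

-- For each coordinate `t` of index `> k` there is a transvection block or a symmetric block `m`
-- with `(m - 1) v = ± v t` at a coordinate of index `k`.
theorem supportedBelow_succ_of_forall_isSylowBlock {k : ℕ} {v : Fin n ⊕ Fin n → F}
    (hv : ∀ m, IsSylowBlock m → SupportedBelow (flagIndex n) k (m *ᵥ v - v)) :
    SupportedBelow (flagIndex n) (k + 1) v := by
  rintro (j | j) hj <;> simp only [flagIndex, Sum.elim_inl, Sum.elim_inr] at hj <;>
    have := j.is_lt
  · have hkj : (⟨k, by omega⟩ : Fin n) < j := Fin.lt_def.mpr (by simp; omega)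
    have := hv _ (isSylowBlock_fromBlocks_diagonal (isUnitriangular_transvection hkj 1))
      (Sum.inl ⟨k, by omega⟩) le_rfl
    rw [fromBlocks_mulVec_sub_self_inl] at this
    simpa [transvection, single_mulVec] using this
  · by_cases hk : k < n
    · set i : Fin n := ⟨k, hk⟩
      by_cases hji : j = i
      -- `single j j 1`, not `single j j 1 + single j j 1`, which is useless in characteristic 2
      · have := hv _ (isSylowBlock_fromBlocks_one (transpose_single j j (1 : F))) (Sum.inl j)
          (by simp [flagIndex, hji, i])
        rw [fromBlocks_mulVec_sub_self_inl] at this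
        simpa [single_mulVec] using this
      · have hB : (single i j (1 : F) + single j i 1)ᵀ = single i j 1 + single j i 1 := by
          rw [transpose_add, transpose_single, transpose_single, add_comm]
        have := hv _ (isSylowBlock_fromBlocks_one hB) (Sum.inl i) le_rfl
        rw [fromBlocks_mulVec_sub_self_inl] at this
        simpa [add_mulVec, single_mulVec, Ne.symm hji] using this
    · set i : Fin n := ⟨j + 1, by omega⟩
      have hji : j < i := Fin.lt_def.mpr (by simp [i])
      have := hv _ (isSylowBlock_fromBlocks_diagonal (isUnitriangular_transvection hji 1))
        (Sum.inr i) (by simp only [flagIndex, Sum.elim_inr, i]; omega)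
      rw [fromBlocks_mulVec_sub_self_inr, transpose_transvection_inv hji.ne] at this
      simpa [transvection, single_mulVec] using this

theorem blockTriangular_flagIndex_of_mem_normalizer {Sp : Subgroup (GL (Fin n ⊕ Fin n) F)}
    (hSp : ∀ M : GL (Fin n ⊕ Fin n) F,
      (M : Matrix (Fin n ⊕ Fin n) (Fin n ⊕ Fin n) F)ᵀ * symplecticForm n F * M =
        symplecticForm n F → M ∈ Sp)
    {g : Sp} (hg : g ∈ Subgroup.normalizer
      ((unitriangularGroup F (flagIndex_injective n)).comap Sp.subtype : Set Sp)) :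
    ((g : GL (Fin n ⊕ Fin n) F) : Matrix (Fin n ⊕ Fin n) (Fin n ⊕ Fin n) F).BlockTriangular
      (flagIndex n) := by
  refine blockTriangular_of_forall_conj_isUnitriangularWrt (flagIndex_injective n)
    (U := {m | IsSylowBlock m}) (fun _ _ => supportedBelow_succ_of_forall_isSylowBlock)
    (g' := ((g⁻¹ : Sp) : GL (Fin n ⊕ Fin n) F)) (by simp) fun m hm => ?_
  let M : GL (Fin n ⊕ Fin n) F := (hm.isUnitriangularWrt.isUnit (flagIndex_injective n)).unit
  have hMSp : M ∈ Sp := hSp M hm.transpose_mul_symplecticForm_mul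
  have hconj := (Subgroup.mem_normalizer_iff.mp (inv_mem hg) ⟨M, hMSp⟩).mp hm.isUnitriangularWrt
  rwa [inv_inv] at hconj

end Symplectic

theorem symplectic_sylow_general (p r n : ℕ) (hp : p.Prime)
    (F : Type) [Field F] [Fintype F] (hF : Fintype.card F = p ^ r)
    (Sp : Subgroup (GL (Fin n ⊕ Fin n) F))
    (hSp : ∀ M : GL (Fin n ⊕ Fin n) F, M ∈ Sp ↔
      (M : Matrix (Fin n ⊕ Fin n) (Fin n ⊕ Fin n) F)ᵀ *
          Matrix.fromBlocks (0 : Matrix (Fin n) (Fin n) F) 1 (-1) 0 *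
          (M : Matrix (Fin n ⊕ Fin n) (Fin n ⊕ Fin n) F) =
        Matrix.fromBlocks (0 : Matrix (Fin n) (Fin n) F) 1 (-1) 0) :
    ∃ P : Sylow p ↥Sp, ∀ M : ↥Sp,
      M ∈ P ↔ ∃ A B : Matrix (Fin n) (Fin n) F,
        IsUnitriangular A ∧ Bᵀ = B ∧
        ((M : GL (Fin n ⊕ Fin n) F) : Matrix (Fin n ⊕ Fin n) (Fin n ⊕ Fin n) F) =
          Matrix.fromBlocks A (A * B) 0 (Aᵀ)⁻¹ := by
  have : Fact p.Prime := ⟨hp⟩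
  have : CharP F p := charP_of_card_eq_prime_pow hF
  have hb := flagIndex_injective n
  let P : Subgroup Sp := (unitriangularGroup F hb).comap Sp.subtype
  have hmem (M : Sp) : M ∈ P ↔
      IsSylowBlock ((M : GL (Fin n ⊕ Fin n) F) : Matrix (Fin n ⊕ Fin n) (Fin n ⊕ Fin n) F) :=
    (isSylowBlock_iff_isUnitriangularWrt ((hSp M).mp M.2)).symm
  refine ⟨⟨P, (isPGroup_unitriangularGroup p hb).comap_of_injective _ Subtype.val_injective,
    fun {Q} hQ hPQ => hQ.eq_of_le_of_normalizer_pow_mem hPQ fun g hg ⟨k, hk⟩ => ?_⟩, hmem⟩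
  refine (blockTriangular_flagIndex_of_mem_normalizer (fun M h => (hSp M).mpr h) hg
    ).isUnitriangularWrt_of_pow_eq_one hb (p := p) (k := k) ?_
  simpa using congrArg (fun x : Sp =>
    ((x : GL (Fin n ⊕ Fin n) F) : Matrix (Fin n ⊕ Fin n) (Fin n ⊕ Fin n) F)) hk

/-- The set of block matrices `[[A, A·B],[0, (Aᵀ)⁻¹]]` with `A` unitriangular and `B`
symmetric is a Sylow `p`-subgroup of the symplectic group `Sp(2n, F)`. -/
theorem symplectic_sylow (p r n : ℕ) (hp : p.Prime) (hr : 0 < r) (hn : 1 ≤ n)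
    (F : Type) [Field F] [Fintype F] (hF : Fintype.card F = p ^ r)
    (Sp : Subgroup (GL (Fin n ⊕ Fin n) F))
    (hSp : ∀ M : GL (Fin n ⊕ Fin n) F, M ∈ Sp ↔
      (M : Matrix (Fin n ⊕ Fin n) (Fin n ⊕ Fin n) F)ᵀ *
          Matrix.fromBlocks (0 : Matrix (Fin n) (Fin n) F) 1 (-1) 0 *
          (M : Matrix (Fin n ⊕ Fin n) (Fin n ⊕ Fin n) F) =
        Matrix.fromBlocks (0 : Matrix (Fin n) (Fin n) F) 1 (-1) 0) :
    ∃ P : Sylow p ↥Sp, ∀ M : ↥Sp,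
      M ∈ P ↔ ∃ A B : Matrix (Fin n) (Fin n) F,
        IsUnitriangular A ∧ Bᵀ = B ∧
        ((M : GL (Fin n ⊕ Fin n) F) : Matrix (Fin n ⊕ Fin n) (Fin n ⊕ Fin n) F) =
          Matrix.fromBlocks A (A * B) 0 (Aᵀ)⁻¹ :=
  symplectic_sylow_general p r n hp F hF Sp hSp
end

section
/- Let p be a prime, r a positive integer, F a finite field with p^r elements, and m > 2. Let Q(m,F) be the group of 2m×2m block matrices [[A, A·B],[0, (Aᵀ)⁻¹]] with A ∈ Up_m(F) and B an alternating m×m matrix over F (Bᵀ = −B with zero diagonal), a subgroup of GL_{2m}(F). Then the center of Q(m,F) is exactly the set of block matrices [[I_m, D],[0, I_m]] with D = x·(E_{1,2} − E_{2,1}) for x ∈ F, and this center is isomorphic to the additive group of F (hence to (ℤ/pℤ)^r). -/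
/-!
An element `M = [[A, A·B], [0, (Aᵀ)⁻¹]]` of `Q(m,F)` that commutes with `[[1, B'], [0, 1]]`
for every alternating `B'` satisfies `A B' Aᵀ = B'`; taking `B' = E_{k,l} - E_{l,k}` forces
`A = 1` as soon as `m ≥ 3`. With `A = 1`, commuting with `[[A', 0], [0, (A'ᵀ)⁻¹]]` for the
elementary unitriangular `A' = 1 + E_{k,l}` means `A' B A'ᵀ = B`, which kills every entry of
`B` outside the top-left `2 × 2` corner. Conversely every unitriangular `A` satisfies
`A J Aᵀ = J` for `J = E_{1,2} - E_{2,1}` (the top-left `2 × 2` block of `A` has determinant `1`),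
so the matrices `[[1, xJ], [0, 1]]` are central, and `x ↦ [[1, xJ], [0, 1]]` is an injective
homomorphism from the additive group of `F`.
-/

open Matrix

lemma Subgroup.mem_center_iff_forall_mem_mul_comm {G : Type*} [Group G] {H : Subgroup G}
    {u : H} : u ∈ Subgroup.center H ↔ ∀ g ∈ H, g * u = u * g := by
  rw [Subgroup.mem_center_iff]
  exact ⟨fun h g hg => congrArg Subtype.val (h ⟨g, hg⟩), fun h g => Subtype.ext (h g g.2)⟩

namespace Matrix

section AltSingle

variable {n R : Type*} [DecidableEq n] [CommRing R]

def altSingle (k l : n) : Matrix n n R := single k l 1 - single l k 1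

lemma altSingle_apply (k l i j : n) :
    (altSingle k l : Matrix n n R) i j =
      (if k = i ∧ l = j then 1 else 0) - if l = i ∧ k = j then 1 else 0 := by
  simp [altSingle, single_apply]

lemma altSingle_apply_self (k l i : n) : (altSingle k l : Matrix n n R) i i = 0 := by
  by_cases hk : k = i <;> simp [altSingle_apply, hk]

lemma transpose_altSingle (k l : n) : (altSingle k l : Matrix n n R)ᵀ = -altSingle k l := by
  simp [altSingle]

lemma mul_single_mul_apply [Fintype n] (A C : Matrix n n R) (k l i j : n) (c : R) :
    (A * single k l c * C) i j = A i k * c * C l j := by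
  simp [mul_apply, single_apply, ite_and, Finset.sum_ite_eq]

lemma mul_altSingle_mul_apply [Fintype n] (A C : Matrix n n R) (k l i j : n) :
    (A * (altSingle k l : Matrix n n R) * C) i j = A i k * C l j - A i l * C k j := by
  simp [altSingle, mul_sub, sub_mul, mul_single_mul_apply]

end AltSingle

section Blocks

variable {n R : Type*} [Fintype n] [DecidableEq n] [CommRing R]

lemma mul_mul_transpose_eq_iff {A X : Matrix n n R} (hA : IsUnit A.det) :
    A * X * Aᵀ = X ↔ A * X = X * (Aᵀ)⁻¹ := by
  have hAT := isUnit_det_transpose A hA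
  constructor
  · intro h
    conv_rhs => rw [← h]
    rw [mul_nonsing_inv_cancel_right _ _ hAT]
  · intro h
    rw [h, nonsing_inv_mul_cancel_right _ _ hAT]

lemma mul_add_mul_eq_of_fromBlocks_mul_comm {A B C A' B' C' : Matrix n n R}
    (h : fromBlocks A B 0 C * fromBlocks A' B' 0 C' =
      fromBlocks A' B' 0 C' * fromBlocks A B 0 C) :
    A * B' + B * C' = A' * B + B' * C := by
  simpa [fromBlocks_multiply] using congrArg toBlocks₁₂ h

def blockUpperRightHom : AddChar (Matrix n n R) (GL (n ⊕ n) R) where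
  toFun D := ⟨fromBlocks 1 D 0 1, fromBlocks 1 (-D) 0 1, by simp [fromBlocks_multiply],
    by simp [fromBlocks_multiply]⟩
  map_zero_eq_one' := by simp [Units.ext_iff]
  map_add_eq_mul' D E := by simp [Units.ext_iff, fromBlocks_multiply, add_comm]

lemma coe_blockUpperRightHom (D : Matrix n n R) :
    (blockUpperRightHom D : Matrix (n ⊕ n) (n ⊕ n) R) = fromBlocks 1 D 0 1 := rfl

lemma injective_blockUpperRightHom :
    Function.Injective (blockUpperRightHom : AddChar (Matrix n n R) (GL (n ⊕ n) R)) :=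
  fun D E h => by simpa [Units.ext_iff, coe_blockUpperRightHom] using h

end Blocks

end Matrix

section Unitriangular

variable {n : ℕ} {F : Type} [Field F] {A : Matrix (Fin n) (Fin n) F}

lemma isUnitriangular_one : IsUnitriangular (1 : Matrix (Fin n) (Fin n) F) :=
  ⟨fun _ => one_apply_eq _, fun _ _ h => one_apply_ne h.ne'⟩

lemma isUnitriangular_one_add_single {k l : Fin n} (h : k < l) :
    IsUnitriangular (1 + single k l (1 : F)) :=
  ⟨fun i => by
      simp [single_apply]
      rintro rfl rfl
      exact h.ne rfl,
    fun i j hji => by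
      simp [single_apply, one_apply_ne hji.ne']
      rintro rfl rfl
      exact (h.trans hji).false⟩

namespace IsUnitriangular

lemma apply_mk_of_lt (hA : IsUnitriangular A) {i j : ℕ} (hi : i < n) (hj : j < n)
    (h : j < i) : A ⟨i, hi⟩ ⟨j, hj⟩ = 0 :=
  hA.2 _ _ h

lemma det_eq_one_s16 (hA : IsUnitriangular A) : A.det = 1 := by
  simp [det_of_isUpperTriangular hA.2, hA.1]

lemma isUnit_det_s16 (hA : IsUnitriangular A) : IsUnit A.det := by
  simp [hA.det_eq_one_s16]

lemma mul_altSingle_mul_transpose (hA : IsUnitriangular A) (hn : 1 < n) :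
    A * altSingle ⟨0, zero_lt_one.trans hn⟩ ⟨1, hn⟩ * Aᵀ =
      altSingle ⟨0, zero_lt_one.trans hn⟩ ⟨1, hn⟩ := by
  ext ⟨i, hi⟩ ⟨j, hj⟩
  rw [mul_altSingle_mul_apply]
  rcases (by omega : i = 0 ∨ i = 1 ∨ 2 ≤ i) with rfl | rfl | hi2 <;>
    rcases (by omega : j = 0 ∨ j = 1 ∨ 2 ≤ j) with rfl | rfl | hj2 <;>
    simp (disch := omega) [altSingle, single_apply, hA.1, hA.apply_mk_of_lt] <;>
    (try split_ifs) <;> first | omega | simp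

lemma eq_one_of_forall_mul_altSingle_mul_transpose (hA : IsUnitriangular A) (hn : 2 < n)
    (h : ∀ k l : Fin n, k ≠ l → A * altSingle k l * Aᵀ = altSingle k l) : A = 1 := by
  -- entry `(i, l)` of the hypothesis for the pair `(k, l)` reads `A i k - A i l * A l k = 0`
  have factor : ∀ i k l : Fin n, i ≠ k → l ≠ k → l ≠ i → A i k = A i l * A l k := by
    intro i k l hik hlk hli
    have hil := congrFun (congrFun (h k l hlk.symm) i) l
    simp only [mul_altSingle_mul_apply, transpose_apply, hA.1, mul_one] at hil
    simp [altSingle_apply, hik.symm, hli] at hil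
    linear_combination hil
  have off : ∀ i k : Fin n, i ≠ k → ((k : ℕ) + 1 < n ∨ 0 < (i : ℕ)) → A i k = 0 := by
    intro i k hik hk
    rcases lt_or_gt_of_ne hik with hlt | hgt
    · rcases hk with hk | hi
      · rw [factor i k ⟨k + 1, hk⟩ hik (by simp [Fin.ext_iff]) (by simp [Fin.ext_iff]; omega),
          hA.2 ⟨k + 1, hk⟩ k (by simp [Fin.lt_def]), mul_zero]
      · rw [factor i k ⟨0, zero_lt_two.trans hn⟩ hik (by simp [Fin.ext_iff]; omega)
          (by simp [Fin.ext_iff]; omega), hA.2 i ⟨0, _⟩ (by simpa [Fin.lt_def] using hi),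
          zero_mul]
    · exact hA.2 _ _ hgt
  ext i k
  by_cases hik : i = k
  · subst hik
    simp [hA.1]
  rw [one_apply_ne hik]
  by_cases hk : (k : ℕ) + 1 < n ∨ 0 < (i : ℕ)
  · exact off i k hik hk
  -- the corner entry `A 0 (n-1)` factors through the second row
  have h1k : A ⟨1, one_lt_two.trans hn⟩ k = 0 :=
    off _ k (by simp [Fin.ext_iff]; omega) (by simp)
  rw [factor i k ⟨1, one_lt_two.trans hn⟩ hik (by simp [Fin.ext_iff]; omega)
    (by simp [Fin.ext_iff]; omega), h1k, mul_zero]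

end IsUnitriangular

end Unitriangular

lemma eq_smul_altSingle_of_forall_conj {n : ℕ} {R : Type*} [CommRing R] (hn : 1 < n)
    {B : Matrix (Fin n) (Fin n) R} (hBt : Bᵀ = -B) (hBd : ∀ i, B i i = 0)
    (h : ∀ k l : Fin n, k < l → (1 + single k l 1) * B * (1 + single k l 1)ᵀ = B) :
    B = B ⟨0, zero_lt_one.trans hn⟩ ⟨1, hn⟩ •
      altSingle ⟨0, zero_lt_one.trans hn⟩ ⟨1, hn⟩ := by
  have hanti : ∀ i j, B j i = -B i j := fun i j => congrFun (congrFun hBt i) j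
  -- entry `(k, j)` of the hypothesis for the pair `(k, l)` reads `B k j + B l j = B k j`
  have hrow : ∀ k l : Fin n, k < l → ∀ j, j ≠ k → B l j = 0 := by
    intro k l hkl j hjk
    have hkj := congrFun (congrFun (h k l hkl) k) j
    simpa [add_mul, mul_add, single_apply, hjk, Ne.symm hjk] using hkj
  have hrow2 : ∀ (l : ℕ) (hl : l < n) j, 2 ≤ l → B ⟨l, hl⟩ j = 0 := by
    intro l hl j hl2
    by_cases hj : (j : ℕ) = 0
    · exact hrow ⟨1, hn⟩ _ (by simp [Fin.lt_def]; omega) j (by simp [Fin.ext_iff, hj])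
    · exact hrow ⟨0, zero_lt_one.trans hn⟩ _ (by simp [Fin.lt_def]; omega) j
        (by simp [Fin.ext_iff, hj])
  have hcol2 : ∀ i (j : ℕ) (hj : j < n), 2 ≤ j → B i ⟨j, hj⟩ = 0 := fun i j hj hj2 => by
    rw [← neg_eq_zero, ← hanti, hrow2 j hj i hj2]
  have h10 := hanti ⟨0, zero_lt_one.trans hn⟩ ⟨1, hn⟩
  ext ⟨i, hi⟩ ⟨j, hj⟩
  rcases (by omega : i = 0 ∨ i = 1 ∨ 2 ≤ i) with rfl | rfl | hi2 <;>
    rcases (by omega : j = 0 ∨ j = 1 ∨ 2 ≤ j) with rfl | rfl | hj2 <;>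
    simp (disch := omega) [altSingle_apply, hBd, hrow2, hcol2, h10]
  split_ifs <;> first | omega | simp

section CentralChar

variable {m : ℕ} {R : Type*} [CommRing R]

def centralChar (hm : 1 < m) : AddChar R (GL (Fin m ⊕ Fin m) R) where
  toFun x := blockUpperRightHom (x • altSingle ⟨0, zero_lt_one.trans hm⟩ ⟨1, hm⟩)
  map_zero_eq_one' := by simp
  map_add_eq_mul' x y := by rw [add_smul, AddChar.map_add_eq_mul]

lemma coe_centralChar (hm : 1 < m) (x : R) :
    (centralChar hm x : Matrix (Fin m ⊕ Fin m) (Fin m ⊕ Fin m) R) =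
      fromBlocks 1 (x • altSingle ⟨0, zero_lt_one.trans hm⟩ ⟨1, hm⟩) 0 1 := rfl

lemma injective_centralChar (hm : 1 < m) : Function.Injective (centralChar (R := R) hm) := by
  intro x y h
  have h01 := congrFun (congrFun (injective_blockUpperRightHom h) ⟨0, zero_lt_one.trans hm⟩)
    ⟨1, hm⟩
  simpa [altSingle_apply] using h01

end CentralChar

section OrthogonalSylow

def orthogonalSylow (m : ℕ) (F : Type) [Field F] :
    Set (Matrix (Fin m ⊕ Fin m) (Fin m ⊕ Fin m) F) :=
  {M | ∃ A B : Matrix (Fin m) (Fin m) F, IsUnitriangular A ∧ Bᵀ = -B ∧ (∀ i, B i i = 0) ∧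
    M = fromBlocks A (A * B) 0 (Aᵀ)⁻¹}

variable {m : ℕ} {F : Type} [Field F] {Q : Subgroup (GL (Fin m ⊕ Fin m) F)}
  (hQ : ∀ M : GL (Fin m ⊕ Fin m) F,
    M ∈ Q ↔ (M : Matrix (Fin m ⊕ Fin m) (Fin m ⊕ Fin m) F) ∈ orthogonalSylow m F)
include hQ

lemma exists_mem_coe_eq {A B : Matrix (Fin m) (Fin m) F} (hA : IsUnitriangular A)
    (hBt : Bᵀ = -B) (hBd : ∀ i, B i i = 0) :
    ∃ N ∈ Q, (N : Matrix _ _ F) = fromBlocks A (A * B) 0 (Aᵀ)⁻¹ :=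
  ⟨GeneralLinearGroup.mkOfDetNeZero (fromBlocks A (A * B) 0 (Aᵀ)⁻¹) (by
      rw [det_fromBlocks_zero₂₁, det_nonsing_inv, det_transpose, hA.det_eq_one_s16]; simp),
    (hQ _).2 ⟨A, B, hA, hBt, hBd, rfl⟩, rfl⟩

lemma centralChar_mem (hm : 1 < m) (x : F) : centralChar hm x ∈ Q :=
  (hQ _).2 ⟨1, x • altSingle ⟨0, zero_lt_one.trans hm⟩ ⟨1, hm⟩, isUnitriangular_one,
    by simp [transpose_altSingle], by simp [altSingle_apply_self], by simp [coe_centralChar]⟩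

lemma centralChar_mul_comm (hm : 1 < m) (x : F) {N : GL (Fin m ⊕ Fin m) F} (hN : N ∈ Q) :
    centralChar hm x * N = N * centralChar hm x := by
  obtain ⟨A, B, hA, -, -, hNAB⟩ := (hQ N).1 hN
  have hJ := (mul_mul_transpose_eq_iff (A := A)
    (X := x • altSingle (⟨0, zero_lt_one.trans hm⟩ : Fin m) ⟨1, hm⟩) hA.isUnit_det_s16).1
    (by simp [hA.mul_altSingle_mul_transpose hm])
  ext : 1
  simp [coe_centralChar, hNAB, fromBlocks_multiply, hJ, add_comm]

lemma exists_centralChar_eq_of_mul_comm (hm : 2 < m) {M : GL (Fin m ⊕ Fin m) F} (hM : M ∈ Q)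
    (hc : ∀ N ∈ Q, M * N = N * M) : ∃ x, centralChar (one_lt_two.trans hm) x = M := by
  obtain ⟨A, B, hA, hBt, hBd, hMAB⟩ := (hQ M).1 hM
  have hcomm : ∀ A' B' : Matrix (Fin m) (Fin m) F, IsUnitriangular A' → B'ᵀ = -B' →
      (∀ i, B' i i = 0) →
      A * (A' * B') + A * B * (A'ᵀ)⁻¹ = A' * (A * B) + A' * B' * (Aᵀ)⁻¹ := by
    intro A' B' hA' hB't hB'd
    obtain ⟨N, hN, hNAB⟩ := exists_mem_coe_eq hQ hA' hB't hB'd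
    apply mul_add_mul_eq_of_fromBlocks_mul_comm
    rw [← hMAB, ← hNAB, ← Units.val_mul, ← Units.val_mul, hc N hN]
  have hA1 : A = 1 := hA.eq_one_of_forall_mul_altSingle_mul_transpose hm fun k l _ => by
    have h := hcomm 1 (altSingle k l) isUnitriangular_one (transpose_altSingle k l)
      (altSingle_apply_self k l)
    rw [mul_mul_transpose_eq_iff hA.isUnit_det_s16]
    simpa [add_comm (A * B)] using h
  subst hA1
  have hB := eq_smul_altSingle_of_forall_conj (one_lt_two.trans hm) hBt hBd fun k l hkl => by
    have hA' := isUnitriangular_one_add_single (F := F) hkl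
    have h := hcomm _ 0 hA' (by simp) (by simp)
    rw [mul_mul_transpose_eq_iff hA'.isUnit_det_s16]
    simpa using h.symm
  refine ⟨B ⟨0, zero_lt_two.trans hm⟩ ⟨1, one_lt_two.trans hm⟩, Units.ext ?_⟩
  rw [coe_centralChar, hMAB, ← hB]
  simp

lemma mem_and_forall_mul_comm_iff (hm : 2 < m) (M : GL (Fin m ⊕ Fin m) F) :
    (M ∈ Q ∧ ∀ N ∈ Q, M * N = N * M) ↔
      ∃ x, centralChar (one_lt_two.trans hm) x = M := by
  constructor
  · rintro ⟨hM, hc⟩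
    exact exists_centralChar_eq_of_mul_comm hQ hm hM hc
  · rintro ⟨x, rfl⟩
    exact ⟨centralChar_mem hQ _ x, fun N hN => centralChar_mul_comm hQ _ x hN⟩

noncomputable def centralCharEquivCenter (hm : 2 < m) : Multiplicative F ≃* Subgroup.center Q :=
  MulEquiv.ofBijective
    (((centralChar (one_lt_two.trans hm)).toMonoidHom.codRestrict Q
        fun x => centralChar_mem hQ _ x.toAdd)
      |>.codRestrict (Subgroup.center Q) fun x =>
        Subgroup.mem_center_iff_forall_mem_mul_comm.2 fun _ hN =>
          (centralChar_mul_comm hQ _ x.toAdd hN).symm)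
    ⟨fun x y h => injective_centralChar (R := F) _ (congrArg (fun z => z.1.1) h), fun z => by
      obtain ⟨x, hx⟩ := (mem_and_forall_mul_comm_iff hQ hm z.1.1).1
        ⟨z.1.2, fun N hN => (Subgroup.mem_center_iff_forall_mem_mul_comm.1 z.2 N hN).symm⟩
      exact ⟨.ofAdd x, Subtype.ext (Subtype.ext hx)⟩⟩

end OrthogonalSylow

/-- For `m > 2`, the center of the group `Q(m,F)` of block matrices
`[[A, A·B],[0, (Aᵀ)⁻¹]]` with `A` unitriangular and `B` alternating consists exactly
of the block matrices `[[I, x • (E_{1,2} - E_{2,1})],[0, I]]`, and is isomorphic to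
the additive group of `F`. -/
theorem center_orthogonal_sylow (m : ℕ) (hm : 2 < m)
    (F : Type) [Field F]
    (Q : Subgroup (GL (Fin m ⊕ Fin m) F))
    (hQ : ∀ M : GL (Fin m ⊕ Fin m) F, M ∈ Q ↔
      ∃ A B : Matrix (Fin m) (Fin m) F,
        IsUnitriangular A ∧ Bᵀ = -B ∧ (∀ i, B i i = 0) ∧
        (M : Matrix (Fin m ⊕ Fin m) (Fin m ⊕ Fin m) F) =
          Matrix.fromBlocks A (A * B) 0 (Aᵀ)⁻¹) :
    ((fun M : GL (Fin m ⊕ Fin m) F =>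
        (M : Matrix (Fin m ⊕ Fin m) (Fin m ⊕ Fin m) F)) ''
        {M : GL (Fin m ⊕ Fin m) F | M ∈ Q ∧ ∀ N ∈ Q, M * N = N * M} =
      {X : Matrix (Fin m ⊕ Fin m) (Fin m ⊕ Fin m) F | ∃ x : F,
        X = Matrix.fromBlocks 1
          (x • (Matrix.single (⟨0, by omega⟩ : Fin m) (⟨1, by omega⟩ : Fin m) (1 : F) -
                Matrix.single (⟨1, by omega⟩ : Fin m) (⟨0, by omega⟩ : Fin m) (1 : F)))
          0 1}) ∧
    Nonempty (↥(Subgroup.center ↥Q) ≃* Multiplicative F) := by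
  refine ⟨?_, ⟨(centralCharEquivCenter hQ hm).symm⟩⟩
  ext X
  simp only [Set.mem_image, Set.mem_ofPred_eq, mem_and_forall_mul_comm_iff hQ hm]
  constructor
  · rintro ⟨M, ⟨x, rfl⟩, rfl⟩
    exact ⟨x, coe_centralChar _ x⟩
  · rintro ⟨x, rfl⟩
    exact ⟨_, ⟨x, rfl⟩, coe_centralChar _ x⟩
end
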